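/- Let Γ be a group acting on the left on a nonempty set X with only finitely many orbits. Then the action of Γ on X is amenable if and only if there exists an orbit O of the action such that the action of Γ on O is amenable. -/

import Mathlib

/-- A real-valued function is bounded. -/
def Bdd {X : Type*} (f : X → ℝ) : Prop := ∃ C : ℝ, ∀ x, |f x| ≤ C

/-- `μ` is a `Γ`-invariant mean for the action of `Γ` on `X`: an ℝ-linear functional on
the space of bounded functions `X → ℝ` lying between the infimum and the supremum, and
invariant under the action of `Γ`. -/
def IsInvariantMean (Γ : Type*) {X : Type*} [Group Γ] [MulAction Γ X]
    (μ : (X → ℝ) → ℝ) : Prop :=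
  (∀ f g : X → ℝ, Bdd f → Bdd g → μ (f + g) = μ f + μ g) ∧
  (∀ (c : ℝ) (f : X → ℝ), Bdd f → μ (c • f) = c * μ f) ∧
  (∀ f : X → ℝ, Bdd f → sInf (Set.range f) ≤ μ f ∧ μ f ≤ sSup (Set.range f)) ∧
  (∀ (g : Γ) (f : X → ℝ), Bdd f → μ (fun x => f (g • x)) = μ f)

/-- The action of `Γ` on `X` is amenable if it admits a `Γ`-invariant mean. -/
def AmenableAction (Γ X : Type*) [Group Γ] [MulAction Γ X] : Prop :=
  ∃ μ : (X → ℝ) → ℝ, IsInvariantMean Γ μ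

/-- A group is amenable if its action on itself by left multiplication is amenable. -/
def AmenableGroup (G : Type*) [Group G] : Prop := AmenableAction G G

/-! An invariant mean on an orbit pushes forward to `X` along the inclusion. Conversely, the
indicators of the finitely many orbits sum to `1`, so some orbit `O` has `μ 1_O > 0`, and
`f ↦ μ (f extended by zero) / μ 1_O` is an invariant mean on `O`. -/

open MulAction Function

namespace Bdd

variable {X Y : Type*} {f g : X → ℝ}

lemma add (hf : Bdd f) (hg : Bdd g) : Bdd (f + g) := by
  obtain ⟨C, hC⟩ := hf
  obtain ⟨D, hD⟩ := hg
  exact ⟨C + D, fun x => (abs_add_le _ _).trans (add_le_add (hC x) (hD x))⟩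

lemma smul (c : ℝ) (hf : Bdd f) : Bdd (c • f) := by
  obtain ⟨C, hC⟩ := hf
  refine ⟨|c| * C, fun x => ?_⟩
  rw [Pi.smul_apply, smul_eq_mul, abs_mul]
  exact mul_le_mul_of_nonneg_left (hC x) (abs_nonneg c)

lemma const (c : ℝ) : Bdd (fun _ : X => c) := ⟨|c|, fun _ => le_rfl⟩

lemma sub (hf : Bdd f) (hg : Bdd g) : Bdd (f - g) := by
  simpa [sub_eq_add_neg] using hf.add (hg.smul (-1))

lemma sum {ι : Type*} (s : Finset ι) {F : ι → X → ℝ} (hF : ∀ i, Bdd (F i)) :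
    Bdd (∑ i ∈ s, F i) := by
  classical
  induction s using Finset.induction with
  | empty => exact const 0
  | insert _ _ h ih => rw [Finset.sum_insert h]; exact (hF _).add ih

lemma indicator_one (s : Set X) : Bdd (s.indicator 1) :=
  ⟨1, fun x => by by_cases hx : x ∈ s <;> simp [hx]⟩

lemma comp (hf : Bdd f) (φ : Y → X) : Bdd (f ∘ φ) := by
  obtain ⟨C, hC⟩ := hf
  exact ⟨C, fun y => hC (φ y)⟩

lemma extend_zero {f : Y → ℝ} (hf : Bdd f) (ι : Y → X) : Bdd (extend ι f 0) := by
  classical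
  obtain ⟨C, hC⟩ := hf
  refine ⟨max C 0, fun x => ?_⟩
  rw [extend_def]
  split_ifs
  · exact (hC _).trans (le_max_left _ _)
  · simp

lemma bddAbove (hf : Bdd f) : BddAbove (Set.range f) := by
  obtain ⟨C, hC⟩ := hf
  exact ⟨C, by rintro _ ⟨x, rfl⟩; exact (abs_le.1 (hC x)).2⟩

lemma bddBelow (hf : Bdd f) : BddBelow (Set.range f) := by
  obtain ⟨C, hC⟩ := hf
  exact ⟨-C, by rintro _ ⟨x, rfl⟩; exact (abs_le.1 (hC x)).1⟩

end Bdd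

/-- `IsInvariantMean` with the bounds `inf f ≤ ν f ≤ sup f` weakened to positivity. -/
structure IsInvariantPositiveFunctional (Γ : Type*) {X : Type*} [Group Γ] [MulAction Γ X]
    (ν : (X → ℝ) → ℝ) : Prop where
  map_add : ∀ f g : X → ℝ, Bdd f → Bdd g → ν (f + g) = ν f + ν g
  map_smul : ∀ (c : ℝ) (f : X → ℝ), Bdd f → ν (c • f) = c * ν f
  nonneg : ∀ f : X → ℝ, Bdd f → 0 ≤ f → 0 ≤ ν f
  map_comp_smul : ∀ (g : Γ) (f : X → ℝ), Bdd f → ν (fun x => f (g • x)) = ν f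

lemma Function.extend_one_zero_eq_indicator {α β : Type*} (f : α → β) :
    extend f (1 : α → ℝ) 0 = (Set.range f).indicator 1 := by
  classical
  funext x
  simp [extend_def, Set.indicator_apply]

section

variable {Γ X Y : Type*} [Group Γ] [MulAction Γ X] [MulAction Γ Y]

lemma MulActionHom.extend_zero_comp_smul (ι : Y →[Γ] X) (hι : Injective ι) (f : Y → ℝ) (g : Γ) :
    extend ι (fun y => f (g • y)) 0 = fun x => extend ι f 0 (g • x) := by
  funext x
  by_cases hx : ∃ y, ι y = x
  · obtain ⟨y, rfl⟩ := hx
    rw [hι.extend_apply, ← _root_.map_smul, hι.extend_apply]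
  · have hgx : ¬∃ y, ι y = g • x := by
      rintro ⟨y, hy⟩
      exact hx ⟨g⁻¹ • y, by rw [_root_.map_smul, hy, inv_smul_smul]⟩
    rw [extend_apply' _ _ _ hx, extend_apply' _ _ _ hgx, Pi.zero_apply, Pi.zero_apply]

namespace IsInvariantPositiveFunctional

variable {ν : (X → ℝ) → ℝ}

lemma map_sub (hν : IsInvariantPositiveFunctional Γ ν) {f g : X → ℝ} (hf : Bdd f) (hg : Bdd g) :
    ν (f - g) = ν f - ν g := by
  rw [eq_sub_iff_add_eq, ← hν.map_add _ _ (hf.sub hg) hg, sub_add_cancel]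

lemma map_sum (hν : IsInvariantPositiveFunctional Γ ν) {ι : Type*} (s : Finset ι)
    {F : ι → X → ℝ} (hF : ∀ i, Bdd (F i)) : ν (∑ i ∈ s, F i) = ∑ i ∈ s, ν (F i) := by
  classical
  induction s using Finset.induction with
  | empty => simpa using hν.map_smul 0 0 (Bdd.const 0)
  | insert _ _ h ih =>
    rw [Finset.sum_insert h, Finset.sum_insert h, hν.map_add _ _ (hF _) (Bdd.sum _ hF), ih]

theorem amenableAction (hν : IsInvariantPositiveFunctional Γ ν) (hpos : 0 < ν 1) :
    AmenableAction Γ X := by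
  have h_const (c : ℝ) : ν (fun _ => c) = c * ν 1 := by
    convert hν.map_smul c 1 (Bdd.const 1) using 2
    ext
    simp
  refine ⟨fun f => ν f / ν 1, fun f g hf hg => ?_, fun c f hf => ?_, fun f hf => ⟨?_, ?_⟩,
    fun g f hf => ?_⟩
  · simp only [hν.map_add f g hf hg, add_div]
  · simp only [hν.map_smul c f hf, mul_div_assoc]
  · have h := hν.nonneg _ (hf.sub (Bdd.const _))
      fun x => sub_nonneg.2 (csInf_le hf.bddBelow ⟨x, rfl⟩)
    rw [hν.map_sub hf (Bdd.const _), h_const] at h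
    rw [le_div_iff₀ hpos]
    linarith
  · have h := hν.nonneg _ ((Bdd.const _).sub hf)
      fun x => sub_nonneg.2 (le_csSup hf.bddAbove ⟨x, rfl⟩)
    rw [hν.map_sub (Bdd.const _) hf, h_const] at h
    rw [div_le_iff₀ hpos]
    linarith
  · simp only [hν.map_comp_smul g f hf]

lemma map (hν : IsInvariantPositiveFunctional Γ ν) (φ : X →[Γ] Y) :
    IsInvariantPositiveFunctional Γ (fun f : Y → ℝ => ν (f ∘ φ)) where
  map_add f g hf hg := hν.map_add _ _ (hf.comp φ) (hg.comp φ)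
  map_smul c f hf := hν.map_smul c _ (hf.comp φ)
  nonneg f hf h := hν.nonneg _ (hf.comp φ) fun x => h (φ x)
  map_comp_smul g f hf := by
    simpa [comp_def, map_smul] using hν.map_comp_smul g _ (hf.comp φ)

lemma restrict (hν : IsInvariantPositiveFunctional Γ ν) (ι : Y →[Γ] X) (hι : Injective ι) :
    IsInvariantPositiveFunctional Γ (fun f : Y → ℝ => ν (extend ι f 0)) where
  map_add f g hf hg := by
    rw [← hν.map_add _ _ (hf.extend_zero ι) (hg.extend_zero ι), ← extend_add, add_zero]
  map_smul c f hf := by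
    rw [← hν.map_smul c _ (hf.extend_zero ι), ← extend_smul, smul_zero]
  nonneg f hf h := hν.nonneg _ (hf.extend_zero ι) fun x => by
    classical
    rw [extend_def]
    split_ifs
    exacts [h _, le_rfl]
  map_comp_smul g f hf := by
    rw [ι.extend_zero_comp_smul hι]
    exact hν.map_comp_smul g _ (hf.extend_zero ι)

end IsInvariantPositiveFunctional

namespace IsInvariantMean

variable {μ : (X → ℝ) → ℝ}

lemma isInvariantPositiveFunctional (hμ : IsInvariantMean Γ μ) :
    IsInvariantPositiveFunctional Γ μ where
  map_add := hμ.1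
  map_smul := hμ.2.1
  nonneg f hf h := (Real.sInf_nonneg (by rintro _ ⟨x, rfl⟩; exact h x)).trans (hμ.2.2.1 f hf).1
  map_comp_smul := hμ.2.2.2

lemma apply_one [Nonempty X] (hμ : IsInvariantMean Γ μ) : μ 1 = 1 := by
  have h := hμ.2.2.1 1 (Bdd.const 1)
  simp only [Pi.one_def, Set.range_const, csInf_singleton, csSup_singleton] at h
  exact le_antisymm h.2 h.1

lemma exists_orbit_indicator_pos [Nonempty X] [Finite (orbitRel.Quotient Γ X)]
    (hμ : IsInvariantMean Γ μ) : ∃ x : X, 0 < μ ((orbit Γ x).indicator 1) := by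
  classical
  have := Fintype.ofFinite (orbitRel.Quotient Γ X)
  have h_sum : ∑ q : orbitRel.Quotient Γ X, q.orbit.indicator 1 = (1 : X → ℝ) := by
    funext x
    simp [Finset.sum_apply, Set.indicator_apply, orbitRel.Quotient.mem_orbit]
  have h_mean_sum : ∑ q : orbitRel.Quotient Γ X, μ (q.orbit.indicator 1) = 1 := by
    rw [← hμ.isInvariantPositiveFunctional.map_sum _ fun q => Bdd.indicator_one _, h_sum,
      hμ.apply_one]
  obtain ⟨q, -, hq⟩ := Finset.exists_lt_of_sum_lt (s := Finset.univ) (f := fun _ => (0 : ℝ))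
    (g := fun q : orbitRel.Quotient Γ X => μ (q.orbit.indicator 1)) (by simp [h_mean_sum])
  obtain ⟨x, rfl⟩ := Quotient.exists_rep q
  exact ⟨x, hq⟩

end IsInvariantMean

def orbitInclusion (x : X) : orbit Γ x →[Γ] X where
  toFun := Subtype.val
  map_smul' _ _ := rfl

end

/-- If a group `Γ` acts on a nonempty set `X` with finitely many orbits, then the action of
`Γ` on `X` is amenable iff the action of `Γ` on some orbit is amenable. -/
theorem amenableAction_iff_exists_orbit (Γ X : Type*) [Group Γ] [MulAction Γ X]
    [Nonempty X] [Finite (MulAction.orbitRel.Quotient Γ X)] :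
    AmenableAction Γ X ↔ ∃ x : X, AmenableAction Γ (MulAction.orbit Γ x) := by
  constructor
  · rintro ⟨μ, hμ⟩
    obtain ⟨x, hx⟩ := hμ.exists_orbit_indicator_pos
    refine ⟨x, (hμ.isInvariantPositiveFunctional.restrict (orbitInclusion x)
      Subtype.val_injective).amenableAction ?_⟩
    have h_range : Set.range (orbitInclusion x) = orbit Γ x := Subtype.range_coe
    rwa [extend_one_zero_eq_indicator, h_range]
  · rintro ⟨x, μ, hμ⟩
    have : Nonempty (orbit Γ x) := ⟨⟨x, mem_orbit_self x⟩⟩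
    exact (hμ.isInvariantPositiveFunctional.map (orbitInclusion x)).amenableAction
      (by simp [Pi.one_comp, hμ.apply_one])
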